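/- In every such system, for every failure model fm, every set critFns of functionalities, every configuration cfg, and every failed set fs, 1resilient(cfg, fs, fm, critFns) holds if and only if 1resilientW(cfg, fs, fm, critFns) holds; that is, replacing nextFS(fm, fs) by nextFSworst(fm, fs) in the definition of one-resilience yields an equivalent definition of one-resilience. -/

import Mathlib

open scoped Classical

/-- Quorum kind for progress: majority or all. -/
inductive ProgressQ | majority | all

/-- Quorum kind for reconfiguration: majority or one. -/
inductive ReconfigQ | majority | one

/-- Size of a progress quorum relative to a replica set of size `k`. -/
def ProgressQ.size : ProgressQ → ℕ → ℕ
  | .majority, k => (k + 2) / 2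
  | .all, k => k

/-- Size of a reconfiguration quorum relative to a replica set of size `k`. -/
def ReconfigQ.size : ReconfigQ → ℕ → ℕ
  | .majority, k => (k + 2) / 2
  | .one, _ => 1

/-- A replication protocol. -/
structure RepProt where
  active : Bool
  progressQ : ProgressQ
  reconfigQ : ReconfigQ

/-- A software component. -/
structure SWComp (Fn DevType : Type) where
  fn : Fn
  fnReq : Finset Fn
  devices : Finset DevType
  cores : ℕ
  ram : ℕ
  fastStarting : Bool
  migratable : Bool
  persisState : Bool
  remoteUse : Bool
  resumable : Bool
  singleInstance : Bool
  smallPersisState : Bool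

/-- An unreplicated software instance: a software component placed on a computer. -/
structure SwInst (C Fn DevType : Type) where
  sw : SWComp Fn DevType
  computer : C

/-- A replicated software instance. The `primary` field is meaningful when the
replication protocol is passive. -/
structure RepSwInst (C Fn DevType : Type) where
  sw : SWComp Fn DevType
  repProt : RepProt
  computers : Finset C
  primary : C

/-- A configuration: finite sets of unreplicated and replicated software instances,
with at most one replicated instance per software component, and nonempty replica sets. -/
structure Config (C Fn DevType : Type) where
  SI : Finset (SwInst C Fn DevType)
  RSI : Finset (RepSwInst C Fn DevType)
  uniqueRep : ∀ r1 ∈ RSI, ∀ r2 ∈ RSI, r1.sw = r2.sw → r1 = r2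
  repNonempty : ∀ r ∈ RSI, r.computers.Nonempty

/-- A system: hardware components are either computers (type `C`) or stand-alone
devices (type `D`), both finite types; `Fn` is the type of functionalities and
`DevType` the type of device types. -/
structure Sys (C D Fn DevType : Type) where
  power : C ⊕ D → Finset (C ⊕ D)
  powerWF : WellFounded (fun a b : C ⊕ D => a ∈ power b)
  cores : C → ℕ
  ram : C → ℕ
  cdevices : C → Finset DevType
  dtype : D → DevType
  SW : Finset (SWComp Fn DevType)
  compatible : SWComp Fn DevType → C → Prop

variable {C D Fn DevType HType : Type}

/-- A hardware component is live w.r.t. a failed set. -/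
def Sys.live (sys : Sys C D Fn DevType) (fs : Finset (C ⊕ D)) : C ⊕ D → Prop :=
  sys.powerWF.fix fun h rec =>
    h ∉ fs ∧ (sys.power h = ∅ ∨ ∃ p, ∃ hp : p ∈ sys.power h, rec p hp)

/-- A device of type `dt` is available on computer `c` with failed set `fs`. -/
def Sys.availDev (sys : Sys C D Fn DevType) (dt : DevType) (c : C) (fs : Finset (C ⊕ D)) : Prop :=
  dt ∈ sys.cdevices c ∨ ∃ d : D, sys.dtype d = dt ∧ sys.live fs (Sum.inr d)

/-- `AvailOn sys cfg fs fn c`: functionality `fn` is available on computer `c`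
in configuration `cfg` with failed set `fs` (a least fixed point). -/
inductive AvailOn (sys : Sys C D Fn DevType) (cfg : Config C Fn DevType)
    (fs : Finset (C ⊕ D)) : Fn → C → Prop where
  | si (fn : Fn) (c : C) (si : SwInst C Fn DevType) :
      sys.live fs (.inl c) →
      si ∈ cfg.SI → si.sw.fn = fn →
      sys.live fs (.inl si.computer) →
      (c = si.computer ∨ si.sw.remoteUse) →
      (∀ fn' ∈ si.sw.fnReq, AvailOn sys cfg fs fn' si.computer) →
      (∀ dt ∈ si.sw.devices, sys.availDev dt si.computer fs) →
      AvailOn sys cfg fs fn c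
  | rsi (fn : Fn) (c : C) (rsi : RepSwInst C Fn DevType) (Q : Finset C) :
      sys.live fs (.inl c) →
      rsi ∈ cfg.RSI → rsi.sw.fn = fn →
      Q ⊆ rsi.computers →
      rsi.repProt.progressQ.size rsi.computers.card ≤ Q.card →
      (∀ c' ∈ Q, sys.live fs (.inl c')) →
      (c ∈ Q ∨ rsi.sw.remoteUse) →
      (rsi.repProt.active = true →
        ∀ c' ∈ Q, ∀ fn' ∈ rsi.sw.fnReq, AvailOn sys cfg fs fn' c') →
      (rsi.repProt.active = true →
        ∀ c' ∈ Q, ∀ dt ∈ rsi.sw.devices, sys.availDev dt c' fs) →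
      (rsi.repProt.active = false →
        ∀ fn' ∈ rsi.sw.fnReq, AvailOn sys cfg fs fn' rsi.primary) →
      (rsi.repProt.active = false →
        ∀ dt ∈ rsi.sw.devices, sys.availDev dt rsi.primary fs) →
      AvailOn sys cfg fs fn c

/-- Functionality `fn` is available in state `⟨cfg, fs⟩`. -/
def avail (sys : Sys C D Fn DevType) (cfg : Config C Fn DevType)
    (fs : Finset (C ⊕ D)) (fn : Fn) : Prop :=
  ∃ c : C, AvailOn sys cfg fs fn c

/-- All functionalities in `F` are available in state `⟨cfg, fs⟩`. -/
def availSet (sys : Sys C D Fn DevType) (cfg : Config C Fn DevType)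
    (fs : Finset (C ⊕ D)) (F : Set Fn) : Prop :=
  ∀ fn ∈ F, avail sys cfg fs fn

/-- Remove dead software instances on failed computers. -/
noncomputable def removeDead (cfg : Config C Fn DevType) (fs : Finset (C ⊕ D)) : Config C Fn DevType where
  SI := cfg.SI.filter fun si =>
    Sum.inl si.computer ∉ fs ∨ (si.sw.resumable ∧ si.sw.persisState ∧ si.sw.fastStarting)
  RSI := cfg.RSI.filter fun rsi =>
    ¬ (∀ c ∈ rsi.computers, Sum.inl c ∈ fs) ∨
      (rsi.sw.resumable ∧ rsi.sw.persisState ∧ rsi.sw.fastStarting)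
  uniqueRep := fun r1 h1 r2 h2 =>
    cfg.uniqueRep r1 (Finset.mem_of_mem_filter r1 h1) r2 (Finset.mem_of_mem_filter r2 h2)
  repNonempty := fun r h => cfg.repNonempty r (Finset.mem_of_mem_filter r h)

/-- Validity of a configuration. -/
def valid (sys : Sys C D Fn DevType) (cfg : Config C Fn DevType) : Prop :=
  (∀ c : C,
    ((cfg.SI.filter fun si => si.computer = c).sum fun si => si.sw.cores)
      + ((cfg.RSI.filter fun rsi => c ∈ rsi.computers).sum fun rsi => rsi.sw.cores)
      ≤ sys.cores c ∧
    ((cfg.SI.filter fun si => si.computer = c).sum fun si => si.sw.ram)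
      + ((cfg.RSI.filter fun rsi => c ∈ rsi.computers).sum fun rsi => rsi.sw.ram)
      ≤ sys.ram c) ∧
  (∀ sw : SWComp Fn DevType, sw.singleInstance →
    (cfg.SI.filter fun si => si.sw = sw).card + (cfg.RSI.filter fun rsi => rsi.sw = sw).card ≤ 1) ∧
  (∀ si ∈ cfg.SI, sys.compatible si.sw si.computer) ∧
  (∀ si ∈ cfg.SI, si.sw ∈ sys.SW) ∧
  (∀ rsi ∈ cfg.RSI, rsi.sw ∈ sys.SW) ∧
  (∀ rsi ∈ cfg.RSI,
    (rsi.sw.persisState ∨ ¬ rsi.sw.resumable) ∧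
    (∀ c ∈ rsi.computers, sys.compatible rsi.sw c) ∧
    (rsi.repProt.active = false → rsi.primary ∈ rsi.computers))

/-- Computer `c` satisfies the requirements to run software `sw` in configuration
`cfg` with failed set `fs`. -/
def canRun (sys : Sys C D Fn DevType) (c : C) (sw : SWComp Fn DevType)
    (cfg : Config C Fn DevType) (fs : Finset (C ⊕ D)) : Prop :=
  sys.compatible sw c ∧ (∀ fn ∈ sw.fnReq, AvailOn sys cfg fs fn c) ∧
  (∀ dt ∈ sw.devices, sys.availDev dt c fs)

/-- Configuration `cfg` with failed set `fs` can be reconfigured to `cfg'`. -/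
def reconfig (sys : Sys C D Fn DevType) (cfg cfg' : Config C Fn DevType)
    (fs : Finset (C ⊕ D)) : Prop :=
  valid sys cfg' ∧
  (∀ rsi' ∈ cfg'.RSI, ∃ rsi ∈ cfg.RSI, rsi.sw = rsi'.sw ∧ rsi.repProt = rsi'.repProt) ∧
  (∀ si' ∈ cfg'.SI, si' ∉ cfg.SI →
    sys.live fs (.inl si'.computer) ∧
    canRun sys si'.computer si'.sw cfg' fs ∧
    ((si'.sw.fastStarting ∧ ¬ si'.sw.persisState ∧ si'.sw.resumable) ∨
     ((¬ si'.sw.persisState ∨ si'.sw.smallPersisState) ∧ si'.sw.migratable ∧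
      ∃ si ∈ cfg.SI, si ∉ cfg'.SI ∧ si.sw = si'.sw))) ∧
  (∀ rsi' ∈ cfg'.RSI, ∀ rsi ∈ cfg.RSI, rsi.sw = rsi'.sw →
    rsi'.computers ≠ rsi.computers →
    (∃ Q ⊆ rsi.computers, rsi.repProt.reconfigQ.size rsi.computers.card ≤ Q.card ∧
       ∀ c ∈ Q, sys.live fs (.inl c)) ∧
    (rsi'.computers ⊆ rsi.computers ∨
      (rsi.sw.fastStarting ∧ (¬ rsi.sw.persisState ∨ rsi.sw.smallPersisState))) ∧
    (rsi.repProt.active = true → ∀ c ∈ rsi'.computers, canRun sys c rsi'.sw cfg' fs) ∧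
    (rsi.repProt.active = false →
      sys.live fs (.inl rsi'.primary) ∧ canRun sys rsi'.primary rsi'.sw cfg' fs))

/-- A failure model. -/
structure FailureModel (C D HType : Type) where
  hwType : C ⊕ D → HType
  n : HType → ℕ
  maxSimultT : HType → ℕ∞
  maxSimult : ℕ∞

/-- The failed set `fs` is consistent with the failure model `fm`. -/
def consistent (fm : FailureModel C D HType) (fs : Finset (C ⊕ D)) : Prop :=
  ∀ t : HType, (fs.filter fun h => fm.hwType h = t).card ≤ fm.n t

/-- `fs'` is a possible next failed set after `fs` under the failure model `fm`. -/
def nextFS (fm : FailureModel C D HType) (fs fs' : Finset (C ⊕ D)) : Prop :=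
  fs ⊂ fs' ∧ consistent fm fs' ∧ ((fs' \ fs).card : ℕ∞) ≤ fm.maxSimult ∧
  ∀ t : HType, (((fs' \ fs).filter fun h => fm.hwType h = t).card : ℕ∞) ≤ fm.maxSimultT t

/-- `fs'` is a worst-case (⊆-maximal) next failed set after `fs`. -/
def nextFSworst (fm : FailureModel C D HType) (fs fs' : Finset (C ⊕ D)) : Prop :=
  nextFS fm fs fs' ∧ ∀ fs'', nextFS fm fs fs'' → fs' ⊆ fs'' → fs'' = fs'

section Resilience

/-- Resilience of state `⟨cfg, fs⟩` w.r.t. failure model `fm` and critical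
functionalities `critFns`. -/
def resilient [Fintype C] [Fintype D] (sys : Sys C D Fn DevType) (fm : FailureModel C D HType)
    (critFns : Set Fn) (cfg : Config C Fn DevType) (fs : Finset (C ⊕ D)) : Prop :=
  availSet sys cfg fs critFns ∧
  ∀ fs', nextFS fm fs fs' →
    ∃ cfg', reconfig sys (removeDead cfg fs') cfg' fs' ∧ resilient sys fm critFns cfg' fs'
termination_by Fintype.card (C ⊕ D) - fs.card
decreasing_by
  rename_i fs' h
  have hss : fs ⊂ fs' := h.1
  have h1 := Finset.card_lt_card hss
  have h2 := Finset.card_le_univ fs'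
  omega

/-- Variant of `resilient` with `nextFSworst` in place of `nextFS`. -/
def resilientW [Fintype C] [Fintype D] (sys : Sys C D Fn DevType) (fm : FailureModel C D HType)
    (critFns : Set Fn) (cfg : Config C Fn DevType) (fs : Finset (C ⊕ D)) : Prop :=
  availSet sys cfg fs critFns ∧
  ∀ fs', nextFSworst fm fs fs' →
    ∃ cfg', reconfig sys (removeDead cfg fs') cfg' fs' ∧ resilientW sys fm critFns cfg' fs'
termination_by Fintype.card (C ⊕ D) - fs.card
decreasing_by
  rename_i fs' h
  have hss : fs ⊂ fs' := h.1.1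
  have h1 := Finset.card_lt_card hss
  have h2 := Finset.card_le_univ fs'
  omega

end Resilience

/-- One-resilience of state `⟨cfg, fs⟩`. -/
def oneResilient (sys : Sys C D Fn DevType) (fm : FailureModel C D HType)
    (critFns : Set Fn) (cfg : Config C Fn DevType) (fs : Finset (C ⊕ D)) : Prop :=
  availSet sys cfg fs critFns ∧
  ∀ fs', nextFS fm fs fs' →
    ∃ cfg', reconfig sys (removeDead cfg fs') cfg' fs' ∧ availSet sys cfg' fs' critFns

/-- Variant of `oneResilient` with `nextFSworst` in place of `nextFS`. -/
def oneResilientW (sys : Sys C D Fn DevType) (fm : FailureModel C D HType)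
    (critFns : Set Fn) (cfg : Config C Fn DevType) (fs : Finset (C ⊕ D)) : Prop :=
  availSet sys cfg fs critFns ∧
  ∀ fs', nextFSworst fm fs fs' →
    ∃ cfg', reconfig sys (removeDead cfg fs') cfg' fs' ∧ availSet sys cfg' fs' critFns

/-- The failure model is unlimited-rate. -/
def unlimitedRate (fm : FailureModel C D HType) : Prop :=
  fm.maxSimult = ⊤ ∧ ∀ t : HType, fm.maxSimultT t = ⊤

/-- The software component `sw` is relocatable in configuration `cfg`. -/
def reloc (sw : SWComp Fn DevType) (cfg : Config C Fn DevType) : Prop :=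
  (sw.fastStarting ∧ ¬ sw.persisState ∧ sw.resumable) ∧
  ((∃ si ∈ cfg.SI, sw.fn ∈ si.sw.fnReq) → sw.remoteUse) ∧
  (∀ si ∈ cfg.SI, si.sw.fn ∈ sw.fnReq → si.sw.remoteUse) ∧
  (∀ rsi ∈ cfg.RSI, rsi.sw.fn ∈ sw.fnReq → rsi.sw.remoteUse)

/-- The state `⟨cfg, fs⟩` is valid. -/
def validState (sys : Sys C D Fn DevType) (cfg : Config C Fn DevType)
    (fs : Finset (C ⊕ D)) : Prop :=
  valid sys cfg ∧ cfg = removeDead cfg fs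

/-- rs-equivalence (relocatable-software equivalence) of configurations. -/
def rsEquiv (sys : Sys C D Fn DevType) (cfg1 cfg2 : Config C Fn DevType) : Prop :=
  valid sys cfg1 ∧ valid sys cfg2 ∧
  let R1 := cfg1.SI.filter fun si => reloc si.sw cfg1
  let R2 := cfg2.SI.filter fun si => reloc si.sw cfg2
  (∃ f : {si // si ∈ R1} → {si // si ∈ R2}, Function.Bijective f ∧
    ∀ si : {si // si ∈ R1},
      (si : SwInst C Fn DevType).sw = ((f si : SwInst C Fn DevType)).sw ∧
      (si : SwInst C Fn DevType).sw.devices ∩ sys.cdevices (si : SwInst C Fn DevType).computer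
        = ((f si : SwInst C Fn DevType)).sw.devices
            ∩ sys.cdevices ((f si : SwInst C Fn DevType)).computer) ∧
  cfg1.SI \ R1 = cfg2.SI \ R2 ∧ cfg1.RSI = cfg2.RSI

/-- The functionality dependency relation: `fn1` depends on `fn2`. -/
def depRel (sys : Sys C D Fn DevType) (fn1 fn2 : Fn) : Prop :=
  ∃ sw ∈ sys.SW, sw.fn = fn1 ∧ fn2 ∈ sw.fnReq
/-! Every ingredient of reconfiguration and of availability is antitone in the failed set, and
by finiteness every possible next failed set `fs₁` is contained in a worst-case one `fs₂`. So a
reconfiguration that restores the critical functionalities after `fs₂` restores them after `fs₁`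
as well. -/

lemma Sys.live_iff (sys : Sys C D Fn DevType) (fs : Finset (C ⊕ D)) (h : C ⊕ D) :
    sys.live fs h ↔
      h ∉ fs ∧ (sys.power h = ∅ ∨ ∃ p, ∃ _ : p ∈ sys.power h, sys.live fs p) := by
  unfold Sys.live
  rw [WellFounded.fix_eq]

section Antitone

variable (sys : Sys C D Fn DevType) {fs fs' : Finset (C ⊕ D)}

lemma Sys.live_anti (hsub : fs ⊆ fs') {h : C ⊕ D} (hl : sys.live fs' h) : sys.live fs h := by
  induction h using sys.powerWF.induction with
  | _ h ih =>
    rw [sys.live_iff] at hl ⊢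
    obtain ⟨hnot, hpow⟩ := hl
    refine ⟨fun hm => hnot (hsub hm), ?_⟩
    rcases hpow with hempty | ⟨p, hp, hlp⟩
    · exact Or.inl hempty
    · exact Or.inr ⟨p, hp, ih p hp hlp⟩

lemma Sys.availDev_anti (hsub : fs ⊆ fs') {dt : DevType} {c : C}
    (h : sys.availDev dt c fs') : sys.availDev dt c fs :=
  h.imp_right fun ⟨d, hd, hl⟩ => ⟨d, hd, sys.live_anti hsub hl⟩

lemma AvailOn.anti {cfg : Config C Fn DevType} (hsub : fs ⊆ fs') {fn : Fn} {c : C}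
    (h : AvailOn sys cfg fs' fn c) : AvailOn sys cfg fs fn c := by
  induction h with
  | si fn c si hlc hmem hfn hlsi hloc _ hdev ih =>
      exact .si fn c si (sys.live_anti hsub hlc) hmem hfn (sys.live_anti hsub hlsi) hloc ih
        fun dt hdt => sys.availDev_anti hsub (hdev dt hdt)
  | rsi fn c rsi Q hlc hmem hfn hQ hcard hliveQ hloc _ hdevA _ hdevP ihA ihP =>
      exact .rsi fn c rsi Q (sys.live_anti hsub hlc) hmem hfn hQ hcard
        (fun c' hc' => sys.live_anti hsub (hliveQ c' hc')) hloc ihA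
        (fun ha c' hc' dt hdt => sys.availDev_anti hsub (hdevA ha c' hc' dt hdt)) ihP
        (fun ha dt hdt => sys.availDev_anti hsub (hdevP ha dt hdt))

lemma availSet_anti {cfg : Config C Fn DevType} (hsub : fs ⊆ fs') {F : Set Fn}
    (h : availSet sys cfg fs' F) : availSet sys cfg fs F := fun fn hfn =>
  (h fn hfn).imp fun _ => AvailOn.anti sys hsub

lemma canRun_anti (hsub : fs ⊆ fs') {c : C} {sw : SWComp Fn DevType}
    {cfg : Config C Fn DevType} (h : canRun sys c sw cfg fs') : canRun sys c sw cfg fs :=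
  ⟨h.1, fun fn hfn => AvailOn.anti sys hsub (h.2.1 fn hfn),
    fun dt hdt => sys.availDev_anti hsub (h.2.2 dt hdt)⟩

end Antitone

section RemoveDead

variable (cfg : Config C Fn DevType) {fs fs' : Finset (C ⊕ D)}

lemma removeDead_SI_anti (hsub : fs ⊆ fs') : (removeDead cfg fs').SI ⊆ (removeDead cfg fs).SI :=
  Finset.monotone_filter_right _ fun _ _ => Or.imp_left fun hnot hm => hnot (hsub hm)

lemma removeDead_RSI_anti (hsub : fs ⊆ fs') :
    (removeDead cfg fs').RSI ⊆ (removeDead cfg fs).RSI :=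
  Finset.monotone_filter_right _ fun _ _ =>
    Or.imp_left fun hnot hall => hnot fun c hc => hsub (hall c hc)

end RemoveDead

lemma reconfig_removeDead_anti (sys : Sys C D Fn DevType) {cfg cfg' : Config C Fn DevType}
    {fs fs' : Finset (C ⊕ D)} (hsub : fs ⊆ fs') (h : reconfig sys (removeDead cfg fs') cfg' fs') :
    reconfig sys (removeDead cfg fs) cfg' fs := by
  obtain ⟨hvalid, hkept, hnewSI, hmovedRSI⟩ := h
  refine ⟨hvalid, fun rsi' hrsi' => ?_, fun si' hsi' hnew => ?_, ?_⟩
  · obtain ⟨rsi, hmem, hsw⟩ := hkept rsi' hrsi'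
    exact ⟨rsi, removeDead_RSI_anti cfg hsub hmem, hsw⟩
  · obtain ⟨hlive, hrun, hkind⟩ :=
      hnewSI si' hsi' fun hm => hnew (removeDead_SI_anti cfg hsub hm)
    refine ⟨sys.live_anti hsub hlive, canRun_anti sys hsub hrun, ?_⟩
    exact hkind.imp_right fun ⟨hstate, hmig, si, hmem, hgone, hsw⟩ =>
      ⟨hstate, hmig, si, removeDead_SI_anti cfg hsub hmem, hgone, hsw⟩
  · intro rsi' hrsi' rsi hrsi hsw hne
    -- `rsi` is the unique replicated instance of its software in `cfg`, hence also the one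
    -- that `hkept` finds in the smaller `removeDead cfg fs'`.
    obtain ⟨rsi₀, hmem₀, hsw₀, -⟩ := hkept rsi' hrsi'
    obtain rfl : rsi = rsi₀ := cfg.uniqueRep rsi (Finset.mem_of_mem_filter rsi hrsi) rsi₀
      (Finset.mem_of_mem_filter rsi₀ hmem₀) (hsw.trans hsw₀.symm)
    obtain ⟨⟨Q, hQsub, hQcard, hQlive⟩, hplace, hactive, hpassive⟩ :=
      hmovedRSI rsi' hrsi' rsi hmem₀ hsw hne
    exact ⟨⟨Q, hQsub, hQcard, fun c hc => sys.live_anti hsub (hQlive c hc)⟩, hplace,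
      fun ha c hc => canRun_anti sys hsub (hactive ha c hc),
      fun ha => (hpassive ha).imp (sys.live_anti hsub) (canRun_anti sys hsub)⟩

lemma nextFSworst_iff_maximal (fm : FailureModel C D HType) (fs fs' : Finset (C ⊕ D)) :
    nextFSworst fm fs fs' ↔ Maximal (nextFS fm fs) fs' :=
  and_congr_right fun _ => forall₂_congr fun _ _ =>
    ⟨fun h hle => (h hle).le, fun h hle => (h hle).antisymm hle⟩

lemma exists_nextFSworst_superset [Finite C] [Finite D] (fm : FailureModel C D HType)
    {fs fs₁ : Finset (C ⊕ D)} (h : nextFS fm fs fs₁) :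
    ∃ fs₂, nextFSworst fm fs fs₂ ∧ fs₁ ⊆ fs₂ := by
  obtain ⟨fs₂, hle, hmax⟩ := Finite.exists_le_maximal h
  exact ⟨fs₂, (nextFSworst_iff_maximal fm fs fs₂).2 hmax, hle⟩

/-- Replacing `nextFS` by `nextFSworst` in the definition of
one-resilience yields an equivalent definition of one-resilience. -/
theorem oneResilient_iff_oneResilientW
    {C D Fn DevType HType : Type} [Fintype C] [Fintype D]
    (sys : Sys C D Fn DevType) (fm : FailureModel C D HType)
    (critFns : Set Fn) (cfg : Config C Fn DevType) (fs : Finset (C ⊕ D)) :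
    oneResilient sys fm critFns cfg fs ↔ oneResilientW sys fm critFns cfg fs := by
  refine ⟨fun ⟨hav, hnext⟩ => ⟨hav, fun fs' hworst => hnext fs' hworst.1⟩, ?_⟩
  rintro ⟨hav, hworst⟩
  refine ⟨hav, fun fs₁ h₁ => ?_⟩
  obtain ⟨fs₂, hfs₂, hsub⟩ := exists_nextFSworst_superset fm h₁
  obtain ⟨cfg', hrec, hav'⟩ := hworst fs₂ hfs₂
  exact ⟨cfg', reconfig_removeDead_anti sys hsub hrec, availSet_anti sys hsub hav'⟩
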